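/- arXiv:2310.07693 — 2 statements merged into one kernel-verified Lean document; each statement's English description precedes it below -/
import Mathlib

section
/- The family of all trees over ω containing a Mathias tree, regarded as a subset of the Polish space Tree_ω, is Σ¹₁-complete: it is analytic, and for every Polish space Y and every analytic set B ⊆ Y there is a Borel measurable function f : Y → Tree_ω whose preimage of this family equals B. -/
open MeasureTheory

/-- The Polish space `Tree_ω` of all trees over `ω`. -/
abbrev TreeOmega : Type :=
  {x : List ℕ → Bool // ∀ σ τ : List ℕ, x σ = true → τ <+: σ → x τ = true}

/-- `M(B)`: the set of strictly increasing finite sequences with entries in `B`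
(a Mathias bush). -/
def MB (B : Set ℕ) : Set (List ℕ) :=
  {σ | (∀ n ∈ σ, n ∈ B) ∧ σ.Pairwise (· < ·)}

/-- `S ⊆ ω^{<ω}` is a tree: closed under initial segments. -/
def IsTreeSet (S : Set (List ℕ)) : Prop :=
  ∀ σ ∈ S, ∀ τ : List ℕ, τ <+: σ → τ ∈ S

/-- A Mathias tree: a tree `S` such that for some `σ ∈ S`, the tree
`S_σ = { τ : σ ⌢ τ ∈ S }` is a Mathias bush `M(B)` for some infinite `B`. -/
def IsMathiasTree (S : Set (List ℕ)) : Prop :=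
  IsTreeSet S ∧ ∃ σ ∈ S, ∃ B : Set ℕ, B.Infinite ∧ {τ : List ℕ | σ ++ τ ∈ S} = MB B

/-- The family of all trees over `ω` containing a Mathias tree. -/
def mathiasFam : Set TreeOmega :=
  {T | ∃ S : Set (List ℕ), IsMathiasTree S ∧ S ⊆ {σ | T.1 σ = true}}

/-!
`T` contains a Mathias tree iff `σ ⌢ M(B) ⊆ T` for some `σ` and some infinite `B`; coding `B` by
its indicator in `ℕ → Bool`, this is a Borel condition on pairs, so `mathiasFam` is a countable
union of projections of Borel sets.

For completeness write an analytic set as `range f` with `f : ℕ^ℕ → Y` continuous, and send `y`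
to the tree of lists of codes of finite sequences that decode to a `<+:`-chain, each of whose
cylinders has an `f`-image with `y` in its closure. If `y = f x`, the codes of the initial
segments of `x`, thinned out to increase, form an infinite `B` with `M(B)` inside this tree.
Conversely, if `σ ⌢ M(B)` lies in the tree, then the pairs `[b, b']` with `b < b'` in `B` force
the decoded nodes of `B` to form a chain of unbounded length; along its branch `x` the point `y`
lies in the closure of the image of every cylinder around `x`, hence `y = f x` since `Y` is
Hausdorff. Each node of the tree is cut out by finitely many closed conditions on `y`, so the
reduction is Borel.
-/

lemma nil_mem_MB (B : Set ℕ) : [] ∈ MB B := ⟨by simp, List.Pairwise.nil⟩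

lemma mem_MB_of_prefix {B : Set ℕ} {s t : List ℕ} (hs : s ∈ MB B) (h : t <+: s) : t ∈ MB B :=
  ⟨fun n hn => hs.1 n (h.sublist.subset hn), hs.2.sublist h.sublist⟩

def mathiasTreeOf (σ : List ℕ) (B : Set ℕ) : Set (List ℕ) :=
  {ρ | ∃ τ ∈ MB B, ρ <+: σ ++ τ}

lemma isMathiasTree_mathiasTreeOf (σ : List ℕ) {B : Set ℕ} (hB : B.Infinite) :
    IsMathiasTree (mathiasTreeOf σ B) := by
  refine ⟨fun ρ ⟨τ, hτ, hρ⟩ ρ' hρ' => ⟨τ, hτ, hρ'.trans hρ⟩,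
    σ, ⟨[], nil_mem_MB B, by simp⟩, B, hB, ?_⟩
  ext τ
  refine ⟨fun ⟨τ', hτ', hτ⟩ => mem_MB_of_prefix hτ' ((List.prefix_append_right_inj σ).1 hτ),
    fun hτ => ⟨τ, hτ, List.prefix_rfl⟩⟩

lemma mem_mathiasFam_iff {T : TreeOmega} :
    T ∈ mathiasFam ↔ ∃ σ : List ℕ, ∃ B : Set ℕ, B.Infinite ∧ ∀ τ ∈ MB B, T.1 (σ ++ τ) = true := by
  constructor
  · rintro ⟨S, ⟨-, σ, -, B, hB, hSσ⟩, hST⟩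
    exact ⟨σ, B, hB, fun τ hτ => hST (show τ ∈ {τ | σ ++ τ ∈ S} from hSσ ▸ hτ)⟩
  · rintro ⟨σ, B, hB, hT⟩
    exact ⟨mathiasTreeOf σ B, isMathiasTree_mathiasTreeOf σ hB,
      fun ρ ⟨τ, hτ, hρ⟩ => T.2 _ ρ (hT τ hτ) hρ⟩

lemma isClosed_setOf_isTree :
    IsClosed {x : List ℕ → Bool | ∀ σ τ : List ℕ, x σ = true → τ <+: σ → x τ = true} := by
  simp only [Set.ofPred_forall]
  refine isClosed_iInter fun σ => isClosed_iInter fun τ => ?_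
  have hclosed : IsClosed {x : List ℕ → Bool | x σ = true → x τ = true} :=
    (isClosed_discrete {b : Bool × Bool | b.1 = true → b.2 = true}).preimage
      (f := fun x : List ℕ → Bool => (x σ, x τ)) ((continuous_apply σ).prodMk (continuous_apply τ))
  by_cases h : τ <+: σ
  · simpa [h] using hclosed
  · simp [h]

instance : PolishSpace TreeOmega :=
  haveI : PolishSpace (List ℕ → Bool) := {}
  isClosed_setOf_isTree.polishSpace

instance : BorelSpace TreeOmega := Subtype.borelSpace _

lemma measurable_set_infinite : Measurable fun s : Set ℕ => s.Infinite := by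
  simp only [Set.infinite_iff_exists_gt]
  exact Measurable.forall fun N => Measurable.exists fun n =>
    (measurable_set_mem n).and measurable_const

lemma measurable_mem_MB (τ : List ℕ) : Measurable fun s : Set ℕ => τ ∈ MB s :=
  (Measurable.forall fun n => measurable_const.imp (measurable_set_mem n)).and measurable_const

lemma measurable_setOf_eq_true : Measurable fun b : ℕ → Bool => {n | b n = true} :=
  measurable_set_iff.2 fun n => by
    simpa using (measurable_pi_apply n : Measurable fun b : ℕ → Bool => b n).eq_const true

def mathiasWitnesses (σ : List ℕ) : Set (TreeOmega × (ℕ → Bool)) :=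
  {p | {n | p.2 n = true}.Infinite ∧ ∀ τ ∈ MB {n | p.2 n = true}, p.1.1 (σ ++ τ) = true}

lemma measurableSet_mathiasWitnesses (σ : List ℕ) : MeasurableSet (mathiasWitnesses σ) := by
  have hB : Measurable fun p : TreeOmega × (ℕ → Bool) => {n | p.2 n = true} :=
    measurable_setOf_eq_true.comp measurable_snd
  have hT (ρ : List ℕ) : Measurable fun p : TreeOmega × (ℕ → Bool) => p.1.1 ρ = true :=
    Measurable.eq_const (f := fun p : TreeOmega × (ℕ → Bool) => p.1.1 ρ)
      ((measurable_pi_apply ρ).comp (measurable_subtype_coe.comp measurable_fst)) true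
  exact measurableSet_setOfPred.2 <| (measurable_set_infinite.comp hB).and <|
    Measurable.forall fun τ => ((measurable_mem_MB τ).comp hB).imp (hT _)

open Classical in
lemma mathiasFam_eq_iUnion_image :
    mathiasFam = ⋃ σ, Prod.fst '' mathiasWitnesses σ := by
  ext T
  simp only [mem_mathiasFam_iff, Set.mem_iUnion, Set.mem_image, Prod.exists, exists_and_right,
    exists_eq_right, mathiasWitnesses, Set.mem_ofPred_eq]
  refine exists_congr fun σ => ⟨fun ⟨B, hB⟩ => ⟨fun n => decide (n ∈ B), by simpa using hB⟩,
    fun ⟨b, hb⟩ => ⟨_, hb⟩⟩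

lemma analyticSet_mathiasFam : AnalyticSet mathiasFam := by
  have : PolishSpace (ℕ → Bool) := {}
  rw [mathiasFam_eq_iUnion_image]
  exact AnalyticSet.iUnion fun σ =>
    (measurableSet_mathiasWitnesses σ).analyticSet.image_of_continuous continuous_fst

section SeqPrefix

variable {α : Type*}

def seqPrefix (x : ℕ → α) (n : ℕ) : List α := (List.range n).map x

@[simp] lemma length_seqPrefix (x : ℕ → α) (n : ℕ) : (seqPrefix x n).length = n := by
  simp [seqPrefix]

lemma take_seqPrefix (x : ℕ → α) {m n : ℕ} (h : m ≤ n) :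
    (seqPrefix x n).take m = seqPrefix x m := by
  simp [seqPrefix, ← List.map_take, List.take_range, min_eq_left h]

lemma seqPrefix_prefix (x : ℕ → α) {m n : ℕ} (h : m ≤ n) : seqPrefix x m <+: seqPrefix x n :=
  take_seqPrefix x h ▸ List.take_prefix m _

lemma seqPrefix_injective (x : ℕ → α) : Function.Injective (seqPrefix x) := fun m n h => by
  simpa using congrArg List.length h

def listCylinder (s : List α) : Set (ℕ → α) := {z | seqPrefix z s.length = s}

lemma listCylinder_seqPrefix (x : ℕ → α) (n : ℕ) :
    listCylinder (seqPrefix x n) = PiNat.cylinder x n := by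
  ext z
  simp [listCylinder, PiNat.mem_cylinder_iff, seqPrefix, List.map_inj_left]

lemma listCylinder_anti {s t : List α} (h : t <+: s) : listCylinder s ⊆ listCylinder t := by
  intro z hz
  rw [listCylinder, Set.mem_ofPred_eq, ← take_seqPrefix z h.length_le, hz,
    ← List.prefix_iff_eq_take.1 h]

lemma exists_seqPrefix_prefix [Inhabited α] {L : ℕ → List α}
    (hL : ∀ i j, i ≤ j → L i <+: L j) (hlen : ∀ n, n ≤ (L n).length) :
    ∃ x : ℕ → α, ∀ n, seqPrefix x n <+: L n := by
  refine ⟨fun i => (L (i + 1)).getD i default, fun n => List.prefix_iff_getElem.2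
    ⟨by simpa using hlen n, fun i hi => ?_⟩⟩
  have hi' : i < n := by simpa using hi
  have hiL : i < (L (i + 1)).length := by have := hlen (i + 1); omega
  simp only [seqPrefix, List.getElem_map, List.getElem_range, List.getD_eq_getElem _ _ hiL]
  exact (hL (i + 1) n hi').getElem hiL

end SeqPrefix

lemma eq_of_forall_mem_closure_image_cylinder {α Y : Type*} [TopologicalSpace α]
    [DiscreteTopology α] [TopologicalSpace Y] [T2Space Y] {f : (ℕ → α) → Y} {x : ℕ → α}
    (hf : ContinuousAt f x) {y : Y} (hy : ∀ n, y ∈ closure (f '' PiNat.cylinder x n)) :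
    y = f x := by
  have hbasis := ((PiNat.isTopologicalBasis_cylinders fun _ => α).nhds_hasBasis (a := x)).map f
  have hcluster : ClusterPt y (Filter.map f (nhds x)) :=
    hbasis.clusterPt_iff_forall_mem_closure.2 fun _ ⟨⟨z, n, hz⟩, hx⟩ => by
      rw [hz, ← PiNat.mem_cylinder_iff_eq.1 (hz ▸ hx)]
      exact hy n
  exact eq_of_nhds_neBot (hcluster.mono hf)

open Classical in
noncomputable def treeOfSet (S : Set (List ℕ)) (hS : IsTreeSet S) : TreeOmega :=
  ⟨fun σ => decide (σ ∈ S), fun σ τ hσ hτ => by simpa using hS σ (by simpa using hσ) τ hτ⟩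

@[simp] lemma treeOfSet_apply_eq_true {S : Set (List ℕ)} (hS : IsTreeSet S) (σ : List ℕ) :
    (treeOfSet S hS).1 σ = true ↔ σ ∈ S := by
  simp [treeOfSet]

lemma treeOfSet_empty_notMem_mathiasFam :
    treeOfSet ∅ (fun _ h => h.elim) ∉ mathiasFam := by
  rintro ⟨S, ⟨-, σ, hσ, -⟩, hST⟩
  exact (treeOfSet_apply_eq_true _ σ).1 (hST hσ)

lemma measurable_treeOfSet {Y : Type*} [MeasurableSpace Y] {S : Y → Set (List ℕ)}
    (hS : ∀ y, IsTreeSet (S y)) (hmeas : ∀ σ, MeasurableSet {y | σ ∈ S y}) :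
    Measurable fun y => treeOfSet (S y) (hS y) := by
  refine Measurable.subtype_mk (measurable_pi_iff.2 fun σ => measurable_to_bool ?_)
  simpa [Set.preimage, treeOfSet] using hmeas σ

open Denumerable

section Reduction

variable {Y : Type*} [TopologicalSpace Y]

def rangeTreeSet (f : (ℕ → ℕ) → Y) (y : Y) : Set (List ℕ) :=
  {s | s.Pairwise (fun a b => ofNat (List ℕ) a <+: ofNat (List ℕ) b) ∧
    ∀ n ∈ s, y ∈ closure (f '' listCylinder (ofNat (List ℕ) n))}

lemma mem_rangeTreeSet_of_sublist {f : (ℕ → ℕ) → Y} {y : Y} {s t : List ℕ}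
    (hs : s ∈ rangeTreeSet f y) (h : t.Sublist s) : t ∈ rangeTreeSet f y :=
  ⟨hs.1.sublist h, fun n hn => hs.2 n (h.subset hn)⟩

lemma isTreeSet_rangeTreeSet (f : (ℕ → ℕ) → Y) (y : Y) : IsTreeSet (rangeTreeSet f y) :=
  fun _ hs _ h => mem_rangeTreeSet_of_sublist hs h.sublist

noncomputable def rangeTree (f : (ℕ → ℕ) → Y) (y : Y) : TreeOmega :=
  treeOfSet (rangeTreeSet f y) (isTreeSet_rangeTreeSet f y)

lemma measurable_rangeTree [MeasurableSpace Y] [OpensMeasurableSpace Y] (f : (ℕ → ℕ) → Y) :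
    Measurable (rangeTree f) :=
  measurable_treeOfSet _ fun _ => measurableSet_setOfPred.2 <| measurable_const.and <|
    Measurable.forall fun _ => measurable_const.imp isClosed_closure.measurableSet.mem

lemma rangeTree_mem_mathiasFam (f : (ℕ → ℕ) → Y) (x : ℕ → ℕ) :
    rangeTree f (f x) ∈ mathiasFam := by
  set u : ℕ → ℕ := fun n => Encodable.encode (seqPrefix x n)
  have hu : Function.Injective u :=
    Encodable.encode_injective.comp (seqPrefix_injective x)
  obtain ⟨φ, hφ, huφ⟩ := Filter.strictMono_subseq_of_tendsto_atTop hu.nat_tendsto_atTop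
  refine mem_mathiasFam_iff.2 ⟨[], Set.range (u ∘ φ), Set.infinite_range_of_injective huφ.injective,
    fun τ ⟨hτB, hτ⟩ => (treeOfSet_apply_eq_true _ _).2 ⟨?_, ?_⟩⟩
  · refine hτ.imp_of_mem fun {a b} ha hb hab => ?_
    obtain ⟨⟨i, rfl⟩, ⟨j, rfl⟩⟩ := And.intro (hτB a ha) (hτB b hb)
    simpa [u] using seqPrefix_prefix x (hφ (huφ.lt_iff_lt.1 hab)).le
  · rintro _ hn
    obtain ⟨i, rfl⟩ := hτB _ hn
    exact subset_closure ⟨x, by simp [u, listCylinder], rfl⟩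

lemma mem_range_of_forall_mem_closure_image [T2Space Y] {f : (ℕ → ℕ) → Y} (hf : Continuous f)
    {L : ℕ → List ℕ} (hL : ∀ i j, i < j → L i <+: L j) (hL_inj : Function.Injective L) {y : Y}
    (hy : ∀ k, y ∈ closure (f '' listCylinder (L k))) : y ∈ Set.range f := by
  have hL_le (i j : ℕ) (hij : i ≤ j) : L i <+: L j := by
    rcases hij.eq_or_lt with rfl | hij
    exacts [List.prefix_rfl, hL i j hij]
  have hlen : StrictMono fun k => (L k).length := fun i j hij =>
    (hL i j hij).length_le.lt_of_ne fun h => hij.ne (hL_inj ((hL i j hij).eq_of_length h))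
  obtain ⟨x, hx⟩ := exists_seqPrefix_prefix hL_le hlen.id_le
  refine ⟨x, (eq_of_forall_mem_closure_image_cylinder hf.continuousAt fun n => ?_).symm⟩
  rw [← listCylinder_seqPrefix]
  exact closure_mono (Set.image_mono (listCylinder_anti (hx n))) (hy n)

lemma mem_range_of_rangeTree_mem_mathiasFam [T2Space Y] {f : (ℕ → ℕ) → Y} (hf : Continuous f)
    {y : Y} (hy : rangeTree f y ∈ mathiasFam) : y ∈ Set.range f := by
  obtain ⟨σ, B, hB, hT⟩ := mem_mathiasFam_iff.1 hy
  set e := Nat.nth (· ∈ B)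
  have he : StrictMono e := Nat.nth_strictMono hB
  have hpair {i j : ℕ} (hij : i < j) : [e i, e j] ∈ rangeTreeSet f y := by
    have hmem : σ ++ [e i, e j] ∈ rangeTreeSet f y := (treeOfSet_apply_eq_true _ _).1 <| hT _
      ⟨fun n hn => by obtain rfl | rfl := List.mem_pair.1 hn <;> exact Nat.nth_mem_of_infinite hB _,
        by simp [he hij]⟩
    exact mem_rangeTreeSet_of_sublist hmem (List.sublist_append_right σ _)
  refine mem_range_of_forall_mem_closure_image hf (L := fun k => ofNat (List ℕ) (e k))
    (fun i j hij => by simpa using (hpair hij).1)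
    ((eqv (List ℕ)).symm.injective.comp he.injective)
    fun k => (hpair k.lt_succ_self).2 _ (by simp)

lemma preimage_rangeTree_mathiasFam [T2Space Y] {f : (ℕ → ℕ) → Y} (hf : Continuous f) :
    rangeTree f ⁻¹' mathiasFam = Set.range f :=
  Set.ext fun _ => ⟨mem_range_of_rangeTree_mem_mathiasFam hf,
    by rintro ⟨x, rfl⟩; exact rangeTree_mem_mathiasFam f x⟩

end Reduction

/-- The family of trees containing a Mathias tree is `Σ¹₁`-complete: it is analytic,
and every analytic subset of every Polish space Borel-reduces to it. -/
theorem mathiasFam_analytic_complete :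
    AnalyticSet mathiasFam ∧
      ∀ (Y : Type) [TopologicalSpace Y] [PolishSpace Y]
        [MeasurableSpace Y] [BorelSpace Y] (B : Set Y),
        AnalyticSet B →
          ∃ f : Y → TreeOmega, Measurable f ∧ f ⁻¹' mathiasFam = B := by
  refine ⟨analyticSet_mathiasFam, fun Y _ _ _ _ B hB => ?_⟩
  rw [AnalyticSet_def] at hB
  rcases hB with rfl | ⟨f, hf, rfl⟩
  · exact ⟨fun _ => treeOfSet ∅ fun _ h => h.elim, measurable_const,
      Set.preimage_const_of_notMem treeOfSet_empty_notMem_mathiasFam⟩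
  · exact ⟨rangeTree f, measurable_rangeTree f, preimage_rangeTree_mathiasFam hf⟩
end

section
/- The family V of all trees over {0,1} containing a Silver tree, regarded as a subset of the Polish space Tree_2, is Σ¹₁-complete: it is analytic, and for every Polish space Y and every analytic set B ⊆ Y there is a Borel measurable function f : Y → Tree_2 whose preimage of V equals B. -/
open MeasureTheory

/-- The Polish space `Tree_2` of all trees over `{0,1}`. -/
abbrev Tree2 : Type :=
  {x : List Bool → Bool // ∀ σ τ : List Bool, x σ = true → τ <+: σ → x τ = true}

/-- A Silver tree: there are a coinfinite `A ⊆ ω` and a function `x : ω → 2` such that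
`S = { σ ∈ 2^{<ω} : σ(n) = x(n) for all n < |σ| with n ∈ A }`. -/
def IsSilverTree (S : Set (List Bool)) : Prop :=
  ∃ A : Set ℕ, Aᶜ.Infinite ∧ ∃ x : ℕ → Bool,
    S = {σ : List Bool | ∀ (n : ℕ) (h : n < σ.length), n ∈ A → σ.get ⟨n, h⟩ = x n}

/-- The family `V` of all trees over `{0,1}` containing a Silver tree. -/
def silverFam : Set Tree2 :=
  {T | ∃ S : Set (List Bool), IsSilverTree S ∧ S ⊆ {σ | T.1 σ = true}}

/-!
A tree `T` lies in `V` iff the Silver tree of some `(A, x)` with `A` coinfinite lies inside `T`;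
this is a Borel condition on `(T, A, x)`, so `V` is the projection of a Borel set.

For hardness, an analytic `B = g(ℕ^ℕ)` is the set of those `y` for which the tree of finite
sequences `l` with `y ∈ closure (g '' extensions l)` has a branch `z`, and then `y = g z` by
continuity of `g`. A tree `R` on `ℕ` is sent to the binary tree `codeTree R` of those `σ` whose
`1`s all sit at codes of initial segments of one node of `R`. A branch `z` of `R` gives a Silver
subtree, free exactly at the codes of the `z ↾ k`. Conversely, the free coordinates of a Silver
subtree are codes of infinitely many pairwise comparable nodes of `R`, which therefore lie along a
branch.
-/

open Encodable Set Descriptive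

section Trees

variable {α : Type*}

def IllFounded (T : Set (List α)) : Prop :=
  ∃ z : ℕ → α, ∀ k, List.ofFn (fun i : Fin k => z i) ∈ T

lemma ofFn_prefix_ofFn (z : ℕ → α) {j k : ℕ} (h : j ≤ k) :
    List.ofFn (fun i : Fin j => z i) <+: List.ofFn (fun i : Fin k => z i) := by
  rw [List.prefix_iff_eq_take]
  apply List.ext_getElem <;> simp [h]

lemma exists_seq_of_isChain_prefix {C : Set (List α)} (hC : IsChain (· <+: ·) C)
    (hC_inf : C.Infinite) : ∃ z : ℕ → α, ∀ k, ∃ c ∈ C, List.ofFn (fun i : Fin k => z i) <+: c := by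
  have agree : ∀ ⦃u v : List α⦄, u ∈ C → v ∈ C → ∀ i (hu : i < u.length) (hv : i < v.length),
      u[i] = v[i] := fun u v hu hv i _ _ =>
    (hC.total hu hv).elim (fun h => h.getElem _) (fun h => (h.getElem _).symm)
  have long : ∀ k, ∃ c ∈ C, k ≤ c.length := by
    by_contra! h
    obtain ⟨k, hk⟩ := h
    have hinj : InjOn List.length C := fun c hc d hd hcd =>
      (hC.total hc hd).elim (·.eq_of_length hcd) (fun h => (h.eq_of_length hcd.symm).symm)
    exact hC_inf (((finite_Iio k).subset (image_subset_iff.2 hk)).of_finite_image hinj)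
  choose c hcC hc using long
  refine ⟨fun n => (c (n + 1))[n]'(hc (n + 1)), fun k => ⟨c k, hcC k, ?_⟩⟩
  rw [List.prefix_iff_eq_take]
  apply List.ext_getElem
  · simp [hc k]
  · intro i hi _
    simp only [List.getElem_ofFn, List.getElem_take]
    exact agree (hcC _) (hcC k) _ _ _

end Trees

def silverTree (A : Set ℕ) (x : ℕ → Bool) : Set (List Bool) :=
  {σ | ∀ (n : ℕ) (h : n < σ.length), n ∈ A → σ.get ⟨n, h⟩ = x n}

lemma mem_silverTree {A : Set ℕ} {x : ℕ → Bool} {σ : List Bool} :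
    σ ∈ silverTree A x ↔ ∀ (n : ℕ) (h : n < σ.length), n ∈ A → σ[n] = x n := Iff.rfl

lemma mem_silverFam_iff {T : Tree2} :
    T ∈ silverFam ↔ ∃ A : Set ℕ, Aᶜ.Infinite ∧ ∃ x, silverTree A x ⊆ {σ | T.1 σ = true} := by
  constructor
  · rintro ⟨S, ⟨A, hA, x, rfl⟩, hS⟩
    exact ⟨A, hA, x, hS⟩
  · rintro ⟨A, hA, x, hS⟩
    exact ⟨_, ⟨A, hA, x, rfl⟩, hS⟩

section Coding

variable {α : Type*} [Encodable α]

def prefixCodes (s : List α) : Set ℕ := encode '' {u | u <+: s}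

open Classical in
noncomputable def codeTree (R : Set (List α)) : Tree2 :=
  ⟨fun σ => decide (∃ s ∈ R, ∀ n (h : n < σ.length), σ[n] = true → n ∈ prefixCodes s),
    fun σ τ hσ hτσ => by
      simp only [decide_eq_true_eq] at hσ ⊢
      obtain ⟨s, hs, hσs⟩ := hσ
      refine ⟨s, hs, fun n hn hτn => hσs n (hn.trans_le hτσ.length_le) ?_⟩
      rwa [← hτσ.getElem hn]⟩

lemma codeTree_apply {R : Set (List α)} {σ : List Bool} :
    (codeTree R).1 σ = true ↔
      ∃ s ∈ R, ∀ n (h : n < σ.length), σ[n] = true → n ∈ prefixCodes s := by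
  simp [codeTree]

lemma codeTree_mem_silverFam {R : Set (List α)} (hR : IllFounded R) : codeTree R ∈ silverFam := by
  obtain ⟨z, hz⟩ := hR
  set c : ℕ → ℕ := fun k => encode (List.ofFn fun i : Fin k => z i)
  have hc : Function.Injective c := fun j k hjk => by
    simpa using congrArg List.length (encode_injective hjk)
  refine mem_silverFam_iff.2 ⟨(range c)ᶜ, by simpa using infinite_range_of_injective hc,
    fun _ => false, fun σ hσ => codeTree_apply.2 ⟨_, hz σ.length, fun n hn hσn => ?_⟩⟩
  obtain ⟨j, rfl⟩ : n ∈ range c := by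
    by_contra hn'
    simp [mem_silverTree.1 hσ n hn hn'] at hσn
  have hj : j < σ.length := by
    simpa using (length_le_encode (List.ofFn fun i : Fin j => z i)).trans_lt hn
  exact ⟨_, ofFn_prefix_ofFn z hj.le, rfl⟩

lemma exists_mem_prefixCodes_of_silverTree_subset {R : Set (List α)} {A : Set ℕ} {x : ℕ → Bool}
    (hsub : silverTree A x ⊆ {σ | (codeTree R).1 σ = true}) {g g' : ℕ} (hg : g ∉ A)
    (hg' : g' ∉ A) : ∃ s ∈ R, g ∈ prefixCodes s ∧ g' ∈ prefixCodes s := by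
  classical
  let σ : List Bool := List.ofFn fun i : Fin (max g g' + 1) =>
    if (i : ℕ) ∈ A then x i else decide ((i : ℕ) = g ∨ (i : ℕ) = g')
  have hσ : σ ∈ silverTree A x := fun n hn hnA => by simp [σ, -List.ofFn_succ, hnA]
  obtain ⟨s, hs, hσs⟩ := codeTree_apply.1 (hsub hσ)
  exact ⟨s, hs, hσs g (by simp [σ]) (by simp [σ, -List.ofFn_succ, hg]),
    hσs g' (by simp [σ]) (by simp [σ, -List.ofFn_succ, hg'])⟩

lemma illFounded_of_codeTree_mem_silverFam {T : tree α}
    (h : codeTree (T : Set (List α)) ∈ silverFam) : IllFounded (T : Set (List α)) := by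
  obtain ⟨A, hA, x, hsub⟩ := mem_silverFam_iff.1 h
  have key {g g' : ℕ} (hg : g ∉ A) (hg' : g' ∉ A) :=
    exists_mem_prefixCodes_of_silverTree_subset hsub hg hg'
  set C : Set (List α) := {u | encode u ∉ A}
  have hCT : C ⊆ T := fun u hu => by
    obtain ⟨s, hs, ⟨v, hvs, hvu⟩, -⟩ := key hu hu
    exact Tree.mem_of_prefix (encode_injective hvu ▸ hvs) hs
  have hC : IsChain (· <+: ·) C := fun u hu u' hu' _ => by
    obtain ⟨s, -, ⟨v, hvs, hvu⟩, ⟨v', hv's, hv'u'⟩⟩ := key hu hu'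
    rw [← encode_injective hvu, ← encode_injective hv'u']
    exact List.prefix_or_prefix_of_prefix hvs hv's
  have hC_inf : C.Infinite := by
    refine (hA.mono fun g hg => ?_).of_image encode
    obtain ⟨s, -, ⟨v, -, rfl⟩, -⟩ := key hg hg
    exact ⟨v, hg, rfl⟩
  obtain ⟨z, hz⟩ := exists_seq_of_isChain_prefix hC hC_inf
  exact ⟨z, fun k => by
    obtain ⟨c, hc, hzc⟩ := hz k
    exact Tree.mem_of_prefix hzc (hCT hc)⟩

lemma codeTree_mem_silverFam_iff (T : tree α) :
    codeTree (T : Set (List α)) ∈ silverFam ↔ IllFounded (T : Set (List α)) :=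
  ⟨illFounded_of_codeTree_mem_silverFam, codeTree_mem_silverFam⟩

lemma measurable_codeTree {Y : Type*} [MeasurableSpace Y] {R : Y → Set (List α)}
    (hR : ∀ l, MeasurableSet {y | l ∈ R y}) : Measurable fun y => codeTree (R y) := by
  refine Measurable.subtype_mk (measurable_pi_lambda _ fun σ => measurable_to_bool ?_)
  simp only [preimage, mem_singleton_iff, decide_eq_true_eq, measurableSet_setOfPred]
  exact Measurable.exists fun s => (measurableSet_setOfPred.1 (hR s)).and measurable_const

end Coding

section Reduction

variable {α Y : Type*}

def extensions (l : List α) : Set (ℕ → α) := {z | ∀ i (h : i < l.length), z i = l[i]}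

lemma extensions_ofFn (z : ℕ → α) (k : ℕ) :
    extensions (List.ofFn fun i : Fin k => z i) = PiNat.cylinder z k := by
  ext w
  simp [extensions, PiNat.mem_cylinder_iff]

lemma extensions_anti {l l' : List α} (h : l <+: l') : extensions l' ⊆ extensions l :=
  fun z hz i hi => by rw [hz i (hi.trans_le h.length_le), h.getElem hi]

lemma PiNat.exists_cylinder_subset_of_mem_nhds [TopologicalSpace α] [DiscreteTopology α]
    {z : ℕ → α} {u : Set (ℕ → α)} (hu : u ∈ nhds z) : ∃ k, PiNat.cylinder z k ⊆ u := by
  obtain ⟨-, ⟨w, k, rfl⟩, hzw, hwu⟩ := (PiNat.isTopologicalBasis_cylinders _).mem_nhds_iff.1 hu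
  exact ⟨k, PiNat.mem_cylinder_iff_eq.1 hzw ▸ hwu⟩

def closureTree [TopologicalSpace Y] (g : (ℕ → α) → Y) (y : Y) : tree α :=
  ⟨{l | y ∈ closure (g '' extensions l)}, fun _ _ h =>
    closure_mono (image_mono (extensions_anti (List.prefix_append _ _))) h⟩

lemma mem_closureTree [TopologicalSpace Y] {g : (ℕ → α) → Y} {y : Y} {l : List α} :
    l ∈ (closureTree g y : Set (List α)) ↔ y ∈ closure (g '' extensions l) := Iff.rfl

lemma eq_of_forall_mem_closure_image_cylinder_s13 [TopologicalSpace α] [DiscreteTopology α]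
    [TopologicalSpace Y] [T3Space Y] {g : (ℕ → α) → Y} (hg : Continuous g)
    {z : ℕ → α} {y : Y} (hy : ∀ k, y ∈ closure (g '' PiNat.cylinder z k)) : y = g z := by
  by_contra hne
  obtain ⟨t, ht, ht_closed, hty⟩ :=
    exists_mem_nhds_isClosed_subset (isOpen_compl_singleton.mem_nhds (Ne.symm hne))
  obtain ⟨k, hk⟩ := PiNat.exists_cylinder_subset_of_mem_nhds (hg.continuousAt.preimage_mem_nhds ht)
  exact hty (closure_minimal (image_subset_iff.2 hk) ht_closed (hy k)) rfl

lemma illFounded_closureTree_iff [TopologicalSpace α] [DiscreteTopology α] [TopologicalSpace Y]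
    [T3Space Y] {g : (ℕ → α) → Y} (hg : Continuous g) (y : Y) :
    IllFounded (closureTree g y : Set (List α)) ↔ y ∈ range g := by
  simp only [IllFounded, mem_closureTree, extensions_ofFn]
  constructor
  · rintro ⟨z, hz⟩
    exact ⟨z, (eq_of_forall_mem_closure_image_cylinder_s13 hg hz).symm⟩
  · rintro ⟨z, rfl⟩
    exact ⟨z, fun k => subset_closure (mem_image_of_mem g (PiNat.self_mem_cylinder z k))⟩

end Reduction

lemma MeasureTheory.AnalyticSet.exists_tree_illFounded_iff {Y : Type*} [TopologicalSpace Y]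
    [T3Space Y] [MeasurableSpace Y] [OpensMeasurableSpace Y] {B : Set Y} (hB : AnalyticSet B) :
    ∃ T : Y → tree ℕ, (∀ l, MeasurableSet {y | l ∈ T y}) ∧
      ∀ y, IllFounded (T y : Set (List ℕ)) ↔ y ∈ B := by
  rw [AnalyticSet] at hB
  rcases hB with rfl | ⟨g, hg, rfl⟩
  · exact ⟨fun _ => ⊥, by simp, by simp [IllFounded]⟩
  · exact ⟨closureTree g, fun _ => isClosed_closure.measurableSet, illFounded_closureTree_iff hg⟩

instance : StandardBorelSpace Tree2 :=
  MeasurableSet.standardBorel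
    (s := {x : List Bool → Bool | ∀ σ τ : List Bool, x σ = true → τ <+: σ → x τ = true})
    (by measurability)

instance : SecondCountableTopology Tree2 := TopologicalSpace.Subtype.secondCountableTopology _

/-- Triples `(T, a, x)` whose Silver tree, with fixed coordinates `{n | a n}`, lies inside `T`;
coding `A` by its indicator puts the witnesses in a standard Borel space. -/
def silverWitnesses : Set (Tree2 × (ℕ → Bool) × (ℕ → Bool)) :=
  {p | {n | p.2.1 n = true}ᶜ.Infinite ∧
    silverTree {n | p.2.1 n = true} p.2.2 ⊆ {σ | p.1.1 σ = true}}

lemma measurableSet_silverWitnesses : MeasurableSet silverWitnesses := by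
  simp only [silverWitnesses, compl_ofPred, Set.infinite_iff_exists_gt, subset_def, mem_silverTree,
    mem_ofPred_eq, measurableSet_setOfPred]
  refine (Measurable.forall fun a => Measurable.exists fun b => ?_).and
    (Measurable.forall fun σ => (Measurable.forall fun n => Measurable.forall fun h => ?_).imp ?_)
  · exact Measurable.and (by fun_prop) measurable_const
  · exact Measurable.imp (by fun_prop) (by fun_prop)
  · have : Measurable fun p : Tree2 × (ℕ → Bool) × (ℕ → Bool) => p.1.1 σ :=
      (measurable_pi_apply σ).comp (measurable_subtype_coe.comp measurable_fst)
    fun_prop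

lemma silverFam_eq_image_fst : silverFam = Prod.fst '' silverWitnesses := by
  ext T
  rw [mem_silverFam_iff]
  constructor
  · rintro ⟨A, hA, x, hsub⟩
    classical
    exact ⟨(T, fun n => decide (n ∈ A), x), by simpa [silverWitnesses] using ⟨hA, hsub⟩, rfl⟩
  · rintro ⟨⟨T, a, x⟩, ⟨ha, hsub⟩, rfl⟩
    exact ⟨_, ha, x, hsub⟩

theorem analyticSet_silverFam : AnalyticSet silverFam := by
  rw [silverFam_eq_image_fst]
  exact measurableSet_silverWitnesses.analyticSet_image measurable_fst

/-- The family of trees containing a Silver tree is `Σ¹₁`-complete: it is analytic,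
and every analytic subset of every Polish space Borel-reduces to it. -/
theorem silverFam_analytic_complete :
    AnalyticSet silverFam ∧
      ∀ (Y : Type) [TopologicalSpace Y] [PolishSpace Y]
        [MeasurableSpace Y] [BorelSpace Y] (B : Set Y),
        AnalyticSet B →
          ∃ f : Y → Tree2, Measurable f ∧ f ⁻¹' silverFam = B := by
  refine ⟨analyticSet_silverFam, fun Y _ _ _ _ B hB => ?_⟩
  obtain ⟨T, hT_meas, hT⟩ := hB.exists_tree_illFounded_iff
  refine ⟨fun y => codeTree (T y : Set (List ℕ)), measurable_codeTree hT_meas, ?_⟩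
  ext y
  exact (codeTree_mem_silverFam_iff (T y)).trans (hT y)
end
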